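/- Let K be a field, f1,…,fm ∈ K[x1,…,xn], A = K[f1,…,fm] the subalgebra they generate, and φ: K[x1,…,xn] → K[z1,…,zr] a K-algebra homomorphism. Then trdeg{φ(f1),…,φ(fm)} = trdeg{f1,…,fm} if and only if the restriction φ|A: A → K[z1,…,zr] is injective. -/

import Mathlib

open MvPolynomial

noncomputable def trdeg (K : Type*) {A : Type*} [CommRing K] [CommRing A] [Algebra K A]
    {m : ℕ} (f : Fin m → A) : ℕ :=
  sSup {r | ∃ s : Finset (Fin m), s.card = r ∧
    AlgebraicIndependent K (fun i : ↥s => f i.1)}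

/-! Choose `s` of maximal size with `φ ∘ f` algebraically independent on `s`. Then `f` is
independent on `s` as well, and if the two transcendence degrees agree, `s` is maximal for `f`
too, so every `f j`, hence all of `A = K[f]`, is algebraic over `K[f_s]`. A nonzero `c ∈ A` then
divides a nonzero `a ∈ K[f_s]` (the constant term of a relation of minimal order at `0`), so
`φ c = 0` would force `φ a = 0`; but `φ` is injective on `K[f_s] ≅ K[φ f_s]`. -/

open Set

section

variable {R A B : Type*} [CommRing R] [CommRing A] [Algebra R A]

theorem IsAlgebraic.eq_zero_of_map_eq_zero [IsDomain A] [Semiring B] {φ : A →+* B}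
    (hφ : Function.Injective (φ.comp (algebraMap R A))) {x : A} (hx : IsAlgebraic R x)
    (h : φ x = 0) : x = 0 := by
  by_contra hx0
  obtain ⟨r, hr, y, hy⟩ := hx.exists_nonzero_dvd (mem_nonZeroDivisors_of_ne_zero hx0)
  exact hr (hφ (by simp [hy, h]))

theorem AlgebraicIndepOn.isAlgebraic_of_forall_card_le [Nontrivial R] {ι : Type*}
    [DecidableEq ι] {x : ι → A} {s : Finset ι} (hs : AlgebraicIndepOn R x s)
    (hmax : ∀ t : Finset ι, AlgebraicIndepOn R x t → t.card ≤ s.card) (i : ι) :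
    IsAlgebraic (Algebra.adjoin R (x '' s)) (x i) := by
  have := hs.algebraMap_injective.nontrivial
  by_contra htr
  have hi : i ∉ s := fun hi => htr <|
    isAlgebraic_algebraMap (⟨x i, Algebra.subset_adjoin ⟨i, hi, rfl⟩⟩ : Algebra.adjoin R (x '' s))
  have hcard := hmax (insert i s) (by rw [Finset.coe_insert]; exact hs.insert htr)
  rw [Finset.card_insert_of_notMem hi] at hcard
  omega

variable [CommRing B] [Algebra R B]

theorem injOn_adjoin_of_isAlgebraic [IsDomain A] (φ : A →ₐ[R] B) {s t : Set A}
    (hs : ∀ x ∈ s, IsAlgebraic (Algebra.adjoin R t) x) (ht : InjOn φ (Algebra.adjoin R t)) :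
    InjOn φ (Algebra.adjoin R s) := by
  intro a ha b hb hab
  have halg : IsAlgebraic (Algebra.adjoin R t) (a - b) :=
    IsAlgebraic.adjoin_of_forall_isAlgebraic (fun x hx => hs x hx.1)
      (isAlgebraic_algebraMap (⟨a - b, sub_mem ha hb⟩ : Algebra.adjoin R s))
  refine sub_eq_zero.1 (halg.eq_zero_of_map_eq_zero (φ := φ.toRingHom) ?_ (by simp [hab]))
  exact fun u v huv => Subtype.ext (ht u.2 v.2 huv)

theorem AlgebraicIndependent.injOn_adjoin_of_comp {ι : Type*} {x : ι → A} (φ : A →ₐ[R] B)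
    (h : AlgebraicIndependent R (φ ∘ x)) : InjOn φ (Algebra.adjoin R (range x)) := by
  rw [Algebra.adjoin_range_eq_range_aeval]
  rintro _ ⟨p, rfl⟩ _ ⟨q, rfl⟩ hpq
  simp only [AlgHom.toRingHom_eq_coe, RingHom.coe_coe, comp_aeval_apply] at hpq
  exact congrArg _ (h hpq)

theorem algebraicIndependent_comp_iff_of_injOn {ι : Type*} {x : ι → A} {φ : A →ₐ[R] B}
    (h : InjOn φ (Algebra.adjoin R (range x))) :
    AlgebraicIndependent R (φ ∘ x) ↔ AlgebraicIndependent R x :=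
  ⟨AlgebraicIndependent.of_comp φ, fun hx => hx.map h⟩

end

section

variable {K A B : Type*} [CommRing K] [CommRing A] [CommRing B] [Algebra K A] [Algebra K B]
  {m : ℕ}

theorem bddAbove_trdeg_set (f : Fin m → A) :
    BddAbove {r | ∃ s : Finset (Fin m), s.card = r ∧
      AlgebraicIndependent K (fun i : ↥s => f i.1)} :=
  ⟨m, by rintro r ⟨s, rfl, -⟩; simpa using s.card_le_univ⟩

theorem card_le_trdeg {f : Fin m → A} {s : Finset (Fin m)} (hs : AlgebraicIndepOn K f s) :
    s.card ≤ trdeg K f :=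
  le_csSup (bddAbove_trdeg_set f) ⟨s, rfl, hs⟩

theorem trdeg_map_eq_of_injOn (f : Fin m → A) {φ : A →ₐ[K] B}
    (h : InjOn φ (Algebra.adjoin K (range f))) : trdeg K (fun i => φ (f i)) = trdeg K f := by
  have hs (s : Finset (Fin m)) : AlgebraicIndependent K (fun i : ↥s => φ (f i.1)) ↔
      AlgebraicIndependent K (fun i : ↥s => f i.1) :=
    algebraicIndependent_comp_iff_of_injOn
      (h.mono (Algebra.adjoin_mono (range_subset_iff.2 fun i => mem_range_self i.1)))
  simp only [trdeg, hs]

end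

section

variable {K A B : Type*} [Field K] [CommRing A] [CommRing B] [Algebra K A] [Algebra K B] {m : ℕ}

theorem exists_card_eq_trdeg [Nontrivial A] (f : Fin m → A) :
    ∃ s : Finset (Fin m), s.card = trdeg K f ∧ AlgebraicIndepOn K f s := by
  have hempty : AlgebraicIndependent K (fun i : ↥(∅ : Finset (Fin m)) => f i.1) :=
    algebraicIndependent_empty_type
  exact Nat.sSup_mem (by exact ⟨0, ∅, rfl, hempty⟩) (bddAbove_trdeg_set f)

theorem injOn_adjoin_of_trdeg_map_eq [IsDomain A] [Nontrivial B] (f : Fin m → A)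
    {φ : A →ₐ[K] B} (h : trdeg K (fun i => φ (f i)) = trdeg K f) :
    InjOn φ (Algebra.adjoin K (range f)) := by
  classical
  obtain ⟨s, hcard, hφs⟩ := exists_card_eq_trdeg (K := K) (fun i => φ (f i))
  have hs : AlgebraicIndepOn K f s := hφs.of_comp φ
  have hmax (t : Finset (Fin m)) (ht : AlgebraicIndepOn K f t) : t.card ≤ s.card :=
    hcard ▸ h ▸ card_le_trdeg ht
  refine injOn_adjoin_of_isAlgebraic φ (t := f '' s) ?_ ?_
  · rintro _ ⟨i, rfl⟩
    exact hs.isAlgebraic_of_forall_card_le hmax i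
  · rw [image_eq_range]
    exact hφs.injOn_adjoin_of_comp φ

end

theorem faithful_iff_injective (K : Type*) [Field K] (n m r : ℕ)
    (f : Fin m → MvPolynomial (Fin n) K)
    (φ : MvPolynomial (Fin n) K →ₐ[K] MvPolynomial (Fin r) K) :
    trdeg K (fun i => φ (f i)) = trdeg K f ↔
      Set.InjOn φ (Algebra.adjoin K (Set.range f) : Subalgebra K (MvPolynomial (Fin n) K)) :=
  ⟨injOn_adjoin_of_trdeg_map_eq f, trdeg_map_eq_of_injOn f⟩
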